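/- Let W_{n,k}^d be the set of weighted oriented partitions of [n] in which all n weights are distinct (hence equal to {0,...,n-1}). The map sending ρ ∈ W_{n,k}^d to the pair (σ, β), where σ ∈ S_n is the unique permutation with w(ρ) = x_1^{σ(1)−1}···x_n^{σ(n)−1} and β ∈ R_{n,k} is the set of weight compositions of ρ, is a bijection between W_{n,k}^d and S_n × R_{n,k}. -/

import Mathlib

open Finset Equiv MvPolynomial

open scoped Classical

noncomputable section

/-- The position of the `j`-th element of the `i`-th block. -/
def bpos (m k : ℕ) (i : Fin m) (j : Fin k) : Fin (m * k) :=
  ⟨k * (i : ℕ) + (j : ℕ), by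
    have hi := i.isLt
    have hj := j.isLt
    calc k * (i : ℕ) + (j : ℕ) < k * (i : ℕ) + k := by omega
      _ = k * ((i : ℕ) + 1) := by ring
      _ ≤ k * m := Nat.mul_le_mul_left k hi
      _ = m * k := Nat.mul_comm k m⟩

/-- Each block of the (oriented) partition is listed in increasing order. -/
def IsBlockMono (m k : ℕ) (π : Equiv.Perm (Fin (m * k))) : Prop :=
  ∀ i : Fin m, StrictMono fun j : Fin k => π (bpos m k i j)

/-- The blocks are listed in increasing order of their first elements. -/
def IsLeadMono (m k : ℕ) (π : Equiv.Perm (Fin (m * k))) : Prop :=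
  ∀ (i i' : Fin m) (j : Fin k), i < i' →
    π (bpos m k i ⟨0, j.pos⟩) < π (bpos m k i' ⟨0, j.pos⟩)

/-- Canonical representative of a set partition of `[n]`, `n = m*k`, into `m` blocks of
size `k`: each block increasing and blocks ordered by their minima. -/
def IsPartRep (m k : ℕ) (π : Equiv.Perm (Fin (m * k))) : Prop :=
  IsBlockMono m k π ∧ IsLeadMono m k π

/-- A `k`-ary function is skew-symmetric. -/
def IsSkewFun {k : ℕ} {α R : Type*} [CommRing R] (f : (Fin k → α) → R) : Prop :=
  ∀ (σ : Equiv.Perm (Fin k)) (v : Fin k → α),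
    f (v ∘ σ) = (Equiv.Perm.sign σ : ℤ) • f v

/-- The hyperpfaffian of a skew-symmetric `k`-ary function on `[m*k]`:
the signed sum over all set partitions of `[m*k]` into `m` blocks of size `k`. -/
def hyperPf (m k : ℕ) {R : Type*} [CommRing R]
    (f : (Fin k → Fin (m * k)) → R) : R :=
  ∑ π ∈ Finset.univ.filter (IsPartRep m k),
    (Equiv.Perm.sign π : ℤ) • ∏ i : Fin m, f fun j => π (bpos m k i j)

/-- A polynomial in `k` variables is skew-symmetric. -/
def IsSkewPoly {k : ℕ} {R : Type*} [CommRing R] (f : MvPolynomial (Fin k) R) : Prop :=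
  ∀ σ : Equiv.Perm (Fin k),
    MvPolynomial.rename (⇑σ) f = (Equiv.Perm.sign σ : ℤ) • f

/-- The hyperpfaffian `Pf (f(x_S))` of the values of a polynomial `f` in `k` variables
at the variables indexed by the `k`-subsets `S` of `[m*k]`. -/
def hyperPfPoly (m k : ℕ) {R : Type*} [CommRing R]
    (f : MvPolynomial (Fin k) R) : MvPolynomial (Fin (m * k)) R :=
  ∑ π ∈ Finset.univ.filter (IsPartRep m k),
    (Equiv.Perm.sign π : ℤ) •
      ∏ i : Fin m, MvPolynomial.rename (fun j => π (bpos m k i j)) f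

/-- The Vandermonde product. -/
def vand (n : ℕ) (R : Type*) [CommRing R] : MvPolynomial (Fin n) R :=
  ∏ p ∈ Finset.univ.filter (fun p : Fin n × Fin n => p.1 < p.2),
    (MvPolynomial.X p.2 - MvPolynomial.X p.1)

/-- The coefficient of `f` at the monomial with exponent vector `r`. -/
def coeffOf {k : ℕ} {R : Type*} [CommRing R] (f : MvPolynomial (Fin k) R)
    (r : Fin k → ℕ) : R :=
  MvPolynomial.coeff (Finsupp.equivFunOnFinite.symm r) f

/-- Membership in `Γ_{n,k}`: a strictly increasing composition of `k/2*(n-1)`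
into `k` distinct nonnegative parts. -/
def InGamma (n k : ℕ) (r : Fin k → ℕ) : Prop :=
  StrictMono r ∧ ∑ j, r j = k / 2 * (n - 1)

/-- Canonical representative of an element `β` of `R_{n,k}`, encoded as a permutation `e` of
`Fin (m*k)` (identified with `{0,…,n-1}`): the blocks of `e` are the compositions of `β`,
each block is increasing and sums to `k/2*(n-1)`, and the blocks are ordered canonically. -/
def IsWeightRep (m k : ℕ) (e : Equiv.Perm (Fin (m * k))) : Prop :=
  IsPartRep m k e ∧
    ∀ i : Fin m, ∑ j : Fin k, ((e (bpos m k i j)) : ℕ) = k / 2 * (m * k - 1)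

/-- The weight of the element `x` of `[m*k]` in the weighted oriented partition with
oriented partition (representative) `π` and weight vectors `w`. -/
def wtOf (m k : ℕ) (π : Equiv.Perm (Fin (m * k))) (w : Fin m → Fin k → ℕ) :
    Fin (m * k) → ℕ := fun x =>
  w ⟨((π.symm x : Fin (m*k)) : ℕ) / k, Nat.div_lt_of_lt_mul (lt_of_lt_of_le (π.symm x).isLt (le_of_eq (Nat.mul_comm m k)))⟩
    ⟨((π.symm x : Fin (m*k)) : ℕ) % k, Nat.mod_lt _ (by
      have ht := (π.symm x).isLt
      have hk : k ≠ 0 := by rintro rfl; omega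
      omega)⟩

end
/-- The set `W_{n,k}^d` of weighted oriented partitions with distinct weights:
pairs of a canonical representative of an oriented partition and a choice of a
weight vector in `Γ_{n,k}` for each block, such that all `n` weights are distinct. -/
noncomputable def Wd (m k : ℕ) :
    Finset (Equiv.Perm (Fin (m * k)) ×
      (Fin m → Fin k → Fin (k / 2 * (m * k - 1) + 1))) :=
  Finset.univ.filter fun ρ =>
    IsLeadMono m k ρ.1 ∧ (∀ i : Fin m, InGamma (m * k) k fun j => (ρ.2 i j : ℕ)) ∧
      Function.Injective (wtOf m k ρ.1 fun i j => (ρ.2 i j : ℕ))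

/-- `ρ` corresponds to the pair `(σ, e)`: the weight of each element `x` is the
exponent `σ x`, and the family of weight vectors of `ρ` is the family `β`
represented by `e`, up to reordering of the blocks. -/
def RelWd (m k : ℕ)
    (ρ : Equiv.Perm (Fin (m * k)) × (Fin m → Fin k → Fin (k / 2 * (m * k - 1) + 1)))
    (p : Equiv.Perm (Fin (m * k)) × Equiv.Perm (Fin (m * k))) : Prop :=
  (∀ x, wtOf m k ρ.1 (fun i j => (ρ.2 i j : ℕ)) x = (p.1 x : ℕ)) ∧
  (∃ ν : Equiv.Perm (Fin m), ∀ (i : Fin m) (j : Fin k),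
    ((p.2 (bpos m k (ν i) j)) : ℕ) = (ρ.2 i j : ℕ))

/-! The `n` weights of `ρ ∈ W^d` are distinct naturals, and since `k` is even their sum is
`(n/k)·(k/2)(n-1) = 0 + 1 + ⋯ + (n-1)`, so they are exactly `0, …, n-1`: this is `σ`. The
weight compositions of the blocks, reordered by their first parts, form the canonical
representative of `β`. Conversely `(σ, β)` forces each block to be `σ⁻¹` of a composition of
`β`, with the blocks ordered by their first elements. In both directions the only freedom is a
reordering of the blocks, and the reordering that makes the first entries increase is unique. -/

open Function

section Blocks

variable {m k : ℕ}

lemma bpos_eq_finProdFinEquiv (i : Fin m) (j : Fin k) : bpos m k i j = finProdFinEquiv (i, j) :=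
  Fin.ext (Nat.add_comm _ _)

lemma bpos_injective : Injective (uncurry (bpos m k)) := by
  intro p q h
  simpa [uncurry, bpos_eq_finProdFinEquiv] using h

lemma exists_bpos_eq (x : Fin (m * k)) : ∃ i j, bpos m k i j = x :=
  ⟨_, _, (bpos_eq_finProdFinEquiv _ _).trans (finProdFinEquiv.apply_symm_apply x)⟩

lemma Equiv.Perm.ext_bpos {π π' : Perm (Fin (m * k))}
    (h : ∀ i j, π (bpos m k i j) = π' (bpos m k i j)) : π = π' := by
  ext1 x
  obtain ⟨i, j, rfl⟩ := exists_bpos_eq x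
  exact h i j

noncomputable def permOfBlocks (g : Fin m → Fin k → Fin (m * k)) (hg : Injective (uncurry g)) :
    Perm (Fin (m * k)) :=
  finProdFinEquiv.symm.trans <|
    Equiv.ofBijective (uncurry g) ((Fintype.bijective_iff_injective_and_card _).2 ⟨hg, by simp⟩)

@[simp] lemma permOfBlocks_bpos (g : Fin m → Fin k → Fin (m * k)) (hg : Injective (uncurry g))
    (i : Fin m) (j : Fin k) : permOfBlocks g hg (bpos m k i j) = g i j := by
  simp [permOfBlocks, bpos_eq_finProdFinEquiv]

lemma isLeadMono_iff {π : Perm (Fin (m * k))} :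
    IsLeadMono m k π ↔ ∀ j : Fin k, StrictMono fun i => π (bpos m k i ⟨0, j.pos⟩) :=
  ⟨fun h j _ _ hlt => h _ _ j hlt, fun h _ _ j hlt => h j hlt⟩

lemma wtOf_eq (π : Perm (Fin (m * k))) (w : Fin m → Fin k → ℕ) (x : Fin (m * k)) :
    wtOf m k π w x = uncurry w (finProdFinEquiv.symm (π.symm x)) :=
  rfl

lemma wtOf_apply_bpos (π : Perm (Fin (m * k))) (w : Fin m → Fin k → ℕ) (i : Fin m) (j : Fin k) :
    wtOf m k π w (π (bpos m k i j)) = w i j := by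
  simp [wtOf_eq, bpos_eq_finProdFinEquiv]

lemma sum_wtOf (π : Perm (Fin (m * k))) (w : Fin m → Fin k → ℕ) :
    ∑ x, wtOf m k π w x = ∑ i, ∑ j, w i j := by
  rw [← Fintype.sum_prod_type']
  exact Fintype.sum_equiv (π.symm.trans finProdFinEquiv.symm) _ _ fun x => wtOf_eq π w x

end Blocks

section Sorting

variable {m k : ℕ} {α : Type*} [LinearOrder α]

lemma Equiv.Perm.eq_of_strictMono_comp {f : Fin m → α} {ν ν' : Perm (Fin m)}
    (h : StrictMono (f ∘ ν)) (h' : StrictMono (f ∘ ν')) : ν = ν' := by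
  have hf : Injective f := by
    simpa [comp_assoc] using h.injective.comp ν.symm.injective
  ext1 i
  exact hf (congrFun (Tuple.unique_monotone h.monotone h'.monotone) i)

lemma exists_perm_strictMono_lead (g : Fin m → Fin k → α) (hg : Injective (uncurry g)) :
    ∃ ν : Perm (Fin m), ∀ j : Fin k, StrictMono fun i => g (ν i) ⟨0, j.pos⟩ := by
  rcases k with _ | k
  · exact ⟨1, fun j => j.elim0⟩
  · have hlead : Injective fun i => g i 0 := fun i i' h => congrArg Prod.fst (@hg (i, 0) (i', 0) h)
    exact ⟨Tuple.sort _, fun _ => (Tuple.monotone_sort _).strictMono_of_injective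
      (hlead.comp (Tuple.sort _).injective)⟩

end Sorting

lemma StrictMono.val_le_fin {n : ℕ} {f : Fin n → ℕ} (hf : StrictMono f) (i : Fin n) :
    (i : ℕ) ≤ f i := by
  obtain ⟨i, hi⟩ := i
  induction i with
  | zero => exact Nat.zero_le _
  | succ i ih => exact (ih (by omega)).trans_lt (hf (Fin.mk_lt_mk.2 (Nat.lt_succ_self i)))

lemma exists_perm_eq_of_injective_of_sum_eq {n : ℕ} {f : Fin n → ℕ} (hf : Injective f)
    (hsum : ∑ x, f x = ∑ x : Fin n, (x : ℕ)) : ∃ σ : Perm (Fin n), ∀ x, f x = σ x := by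
  set τ := Tuple.sort f
  have hτ : StrictMono (f ∘ τ) :=
    (Tuple.monotone_sort f).strictMono_of_injective (hf.comp τ.injective)
  have hsorted : ∀ i : Fin n, f (τ i) = i := by
    have hle : ∀ i ∈ (univ : Finset (Fin n)), (i : ℕ) ≤ f (τ i) := fun i _ => hτ.val_le_fin i
    refine fun i => ((Finset.sum_eq_sum_iff_of_le hle).1 ?_ i (mem_univ _)).symm
    rw [← hsum]
    exact (Equiv.sum_comp τ f).symm
  exact ⟨τ.symm, fun x => by simpa using hsorted (τ.symm x)⟩

section WeightedPartitions

variable {m k : ℕ}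

lemma sum_wtOf_of_inGamma (hk : Even k) (π : Perm (Fin (m * k))) {w : Fin m → Fin k → ℕ}
    (hw : ∀ i, InGamma (m * k) k (w i)) : ∑ x, wtOf m k π w x = ∑ x : Fin (m * k), (x : ℕ) := by
  obtain ⟨r, rfl⟩ := hk
  have hr : (r + r) / 2 = r := by omega
  calc _ = m * (r * (m * (r + r) - 1)) := by
        simp [sum_wtOf, fun i => (hw i).2, hr]
    _ = m * (r + r) * (m * (r + r) - 1) / 2 := by
        rw [show m * (r + r) * (m * (r + r) - 1) = 2 * (m * (r * (m * (r + r) - 1))) by ring,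
          Nat.mul_div_cancel_left _ two_pos]
    _ = ∑ x : Fin (m * (r + r)), (x : ℕ) := by
        rw [Fin.sum_univ_eq_sum_range (fun x => x), Finset.sum_range_id]

lemma val_lt_weightBound (hk : Even k) (x : Fin (m * k)) : (x : ℕ) < k / 2 * (m * k - 1) + 1 := by
  obtain ⟨r, rfl⟩ := hk
  have hr : (r + r) / 2 = r := by omega
  rcases Nat.eq_zero_or_pos r with rfl | hpos
  · exact absurd x.isLt (by simp)
  have hx := x.isLt
  have hle : m * (r + r) - 1 ≤ r * (m * (r + r) - 1) := Nat.le_mul_of_pos_left _ hpos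
  rw [hr]
  omega

variable {ρ ρ' : Perm (Fin (m * k)) × (Fin m → Fin k → Fin (k / 2 * (m * k - 1) + 1))}
  {p p' : Perm (Fin (m * k)) × Perm (Fin (m * k))}

lemma isLeadMono_of_mem_Wd (hρ : ρ ∈ Wd m k) : IsLeadMono m k ρ.1 :=
  (mem_filter.1 hρ).2.1

lemma RelWd.right_unique (hp : IsLeadMono m k p.2) (hp' : IsLeadMono m k p'.2)
    (h : RelWd m k ρ p) (h' : RelWd m k ρ p') : p = p' := by
  obtain ⟨hσ, ν, hν⟩ := h
  obtain ⟨hσ', ν', hν'⟩ := h'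
  have hσσ' : p.1 = p'.1 := Equiv.ext fun x => Fin.ext ((hσ x).symm.trans (hσ' x))
  have he : p.2 = p'.2 := by
    refine Equiv.Perm.ext_bpos fun i j => ?_
    let lead : Fin m → ℕ := fun i => ρ.2 i ⟨0, j.pos⟩
    have hνν' : ν.symm = ν'.symm := by
      refine Equiv.Perm.eq_of_strictMono_comp (f := lead) ?_ ?_
      · simpa [lead, comp_def, ← hν] using Fin.val_strictMono.comp (isLeadMono_iff.1 hp j)
      · simpa [lead, comp_def, ← hν'] using Fin.val_strictMono.comp (isLeadMono_iff.1 hp' j)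
    have := hν (ν.symm i) j
    rw [Equiv.apply_symm_apply, hνν', ← hν', Equiv.apply_symm_apply] at this
    exact Fin.ext this
  exact Prod.ext hσσ' he

lemma RelWd.exists_perm_apply_bpos (h : RelWd m k ρ p) :
    ∃ ν : Perm (Fin m), ∀ i j, ρ.1 (bpos m k i j) = p.1.symm (p.2 (bpos m k (ν i) j)) ∧
      (ρ.2 i j : ℕ) = p.2 (bpos m k (ν i) j) := by
  obtain ⟨hσ, ν, hν⟩ := h
  refine ⟨ν, fun i j => ⟨?_, (hν i j).symm⟩⟩
  rw [Equiv.eq_symm_apply]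
  exact Fin.ext ((hσ _).symm.trans ((wtOf_apply_bpos _ _ i j).trans (hν i j).symm))

lemma RelWd.left_unique (hρ : IsLeadMono m k ρ.1) (hρ' : IsLeadMono m k ρ'.1)
    (h : RelWd m k ρ p) (h' : RelWd m k ρ' p) : ρ = ρ' := by
  obtain ⟨ν, hν⟩ := h.exists_perm_apply_bpos
  obtain ⟨ν', hν'⟩ := h'.exists_perm_apply_bpos
  have hνν' : Fin k → ν = ν' := fun j =>
    Equiv.Perm.eq_of_strictMono_comp (f := fun i => p.1.symm (p.2 (bpos m k i ⟨0, j.pos⟩)))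
      (by simpa [comp_def, hν] using isLeadMono_iff.1 hρ j)
      (by simpa [comp_def, hν'] using isLeadMono_iff.1 hρ' j)
  refine Prod.ext (Equiv.Perm.ext_bpos fun i j => ?_) (funext fun i => funext fun j => ?_)
  · rw [(hν i j).1, (hν' i j).1, hνν' j]
  · exact Fin.ext (by rw [(hν i j).2, (hν' i j).2, hνν' j])

lemma exists_relWd_of_mem_Wd (hk : Even k) (hρ : ρ ∈ Wd m k) :
    ∃ p, IsWeightRep m k p.2 ∧ RelWd m k ρ p := by
  obtain ⟨-, -, hγ, hinj⟩ := mem_filter.1 hρ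
  obtain ⟨σ, hσ⟩ := exists_perm_eq_of_injective_of_sum_eq hinj (sum_wtOf_of_inGamma hk ρ.1 hγ)
  let g : Fin m → Fin k → Fin (m * k) := fun i j => σ (ρ.1 (bpos m k i j))
  have hg : Injective (uncurry g) := (σ.injective.comp ρ.1.injective).comp bpos_injective
  have hW : ∀ i j, (ρ.2 i j : ℕ) = g i j := fun i j => by rw [← hσ, wtOf_apply_bpos]
  obtain ⟨ν, hν⟩ := exists_perm_strictMono_lead g hg
  let e := permOfBlocks (fun i j => g (ν i) j) (hg.comp (ν.injective.prodMap injective_id))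
  have he : ∀ i j, e (bpos m k i j) = g (ν i) j := permOfBlocks_bpos _ _
  refine ⟨(σ, e), ⟨⟨fun i j j' hjj' => ?_, isLeadMono_iff.2 fun j => ?_⟩, fun i => ?_⟩,
    hσ, ν.symm, fun i j => ?_⟩
  · simpa only [he, Fin.lt_def, ← hW] using (hγ (ν i)).1 hjj'
  · simpa only [he] using hν j
  · simpa only [he, ← hW] using (hγ (ν i)).2
  · rw [he, Equiv.apply_symm_apply, hW]

lemma exists_mem_Wd_relWd (hk : Even k) (hp : IsWeightRep m k p.2) :
    ∃ ρ ∈ Wd m k, RelWd m k ρ p := by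
  obtain ⟨⟨hblock, -⟩, hsum⟩ := hp
  let g : Fin m → Fin k → Fin (m * k) := fun i j => p.1.symm (p.2 (bpos m k i j))
  have hg : Injective (uncurry g) := (p.1.symm.injective.comp p.2.injective).comp bpos_injective
  obtain ⟨ν, hν⟩ := exists_perm_strictMono_lead g hg
  let π := permOfBlocks (fun i j => g (ν i) j) (hg.comp (ν.injective.prodMap injective_id))
  have hπ : ∀ i j, π (bpos m k i j) = g (ν i) j := permOfBlocks_bpos _ _
  let w : Fin m → Fin k → Fin (k / 2 * (m * k - 1) + 1) :=
    fun i j => ⟨p.2 (bpos m k (ν i) j), val_lt_weightBound hk _⟩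
  have hwt : ∀ x, wtOf m k π (fun i j => (w i j : ℕ)) x = p.1 x := fun x => by
    obtain ⟨i, j, hij⟩ := exists_bpos_eq (π.symm x)
    rw [← π.apply_symm_apply x, ← hij, wtOf_apply_bpos, hπ]
    exact congrArg Fin.val (p.1.apply_symm_apply _).symm
  refine ⟨(π, w), mem_filter.2 ⟨mem_univ _, isLeadMono_iff.2 fun j => ?_, fun i => ?_, ?_⟩,
    hwt, ν, fun i j => rfl⟩
  · simpa only [hπ] using hν j
  · exact ⟨Fin.val_strictMono.comp (hblock (ν i)), hsum (ν i)⟩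
  · rw [show wtOf m k π (fun i j => (w i j : ℕ)) = fun x => (p.1 x : ℕ) from funext hwt]
    exact Fin.val_injective.comp p.1.injective

end WeightedPartitions

theorem stmt9 (m k : ℕ) (hk : Even k) :
    (∀ ρ ∈ Wd m k, ∃! p,
      p ∈ (Finset.univ : Finset (Equiv.Perm (Fin (m * k)))) ×ˢ
          Finset.univ.filter (IsWeightRep m k) ∧ RelWd m k ρ p) ∧
    (∀ p ∈ (Finset.univ : Finset (Equiv.Perm (Fin (m * k)))) ×ˢ
        Finset.univ.filter (IsWeightRep m k),
      ∃! ρ, ρ ∈ Wd m k ∧ RelWd m k ρ p) := by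
  have mem_reps : ∀ p, p ∈ (univ : Finset (Perm (Fin (m * k)))) ×ˢ univ.filter (IsWeightRep m k) ↔
      IsWeightRep m k p.2 := by
    simp
  refine ⟨fun ρ hρ => ?_, fun p hp => ?_⟩
  · obtain ⟨p, hp, hrel⟩ := exists_relWd_of_mem_Wd hk hρ
    refine ⟨p, ⟨(mem_reps p).2 hp, hrel⟩, fun p' ⟨hp', hrel'⟩ => ?_⟩
    exact hrel'.right_unique ((mem_reps p').1 hp').1.2 hp.1.2 hrel
  · obtain ⟨ρ, hρ, hrel⟩ := exists_mem_Wd_relWd hk ((mem_reps p).1 hp)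
    exact ⟨ρ, ⟨hρ, hrel⟩, fun ρ' ⟨hρ', hrel'⟩ =>
      hrel'.left_unique (isLeadMono_of_mem_Wd hρ') (isLeadMono_of_mem_Wd hρ) hrel⟩
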